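/- arXiv:1511.07511 — 5 statements merged into one kernel-verified Lean document; each statement's English description precedes it below -/
import Mathlib

section
/- Let p be a prime and n a positive integer with p ∤ n. Let V be the quotient of the permutation F_p-representation of S_n on F_p^n by the span of the all-ones vector. If p is odd, then H^1(S_n, V) = 0. If p = 2 and n ≥ 3, then H^1(S_n, V) = 0. -/
/-!
Since `p ∤ n`, the all-ones line `D` splits off `F_p[X]` equivariantly, so a cocycle `f` with
values in `V = F_p[X] / D` lifts to a cocycle `F` with values in `F_p[X]`. By Shapiro's lemma,
`F` is a coboundary as soon as the homomorphism `S_{n-1} → F_p` obtained by restricting `F` to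
the stabiliser of a point `x₀` and evaluating at `x₀` vanishes. Every homomorphism out of a
symmetric group factors through the sign, so it extends to `S_n`; subtracting the corresponding
`D`-valued cocycle from `F` leaves a coboundary, and projecting back to `V` kills the `D`-valued
part. Hence `f` is a coboundary.
-/

/-- The quotient representation on `M ⧸ S` for an invariant submodule `S`. -/
noncomputable def Representation.quot {k G M : Type} [CommRing k] [Group G] [AddCommGroup M]
    [Module k M] (ρ : Representation k G M) (S : Submodule k M)
    (hS : ∀ g : G, ∀ x ∈ S, ρ g x ∈ S) : Representation k G (M ⧸ S) where
  toFun g := S.mapQ S (ρ g) fun x hx => hS g x hx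
  map_one' := Submodule.linearMap_qext _ (by ext x; simp)
  map_mul' g h := Submodule.linearMap_qext _ (by ext x; simp [Submodule.mapQ_apply])

/-- The permutation representation of `S_n` on `F_p[X]`, `X = {1,...,n}`. -/
noncomputable def permRep (p n : ℕ) :
    Representation (ZMod p) (Equiv.Perm (Fin n)) (Fin n →₀ ZMod p) where
  toFun σ := Finsupp.lmapDomain (ZMod p) (ZMod p) (σ • ·)
  map_one' := by ext; simp
  map_mul' x y := by ext; simp [mul_smul]

/-- The sum of all basis vectors `e_1 + ... + e_n`. -/
noncomputable def allOnes (p n : ℕ) : Fin n →₀ ZMod p := ∑ i, Finsupp.single i 1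

/-- The submodule `D` spanned by the sum of all basis vectors. -/
noncomputable def allOnesLine (p n : ℕ) : Submodule (ZMod p) (Fin n →₀ ZMod p) :=
  Submodule.span (ZMod p) {allOnes p n}

lemma permRep_allOnes (p n : ℕ) (σ : Equiv.Perm (Fin n)) :
    permRep p n σ (allOnes p n) = allOnes p n := by
  unfold permRep allOnes
  rw [map_sum]
  refine Fintype.sum_equiv σ _ _ fun i => ?_
  show Finsupp.mapDomain _ _ = _
  rw [Finsupp.mapDomain_single]
  rfl

lemma allOnesLine_invariant (p n : ℕ) (σ : Equiv.Perm (Fin n)) :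
    ∀ x ∈ allOnesLine p n, permRep p n σ x ∈ allOnesLine p n := by
  intro x hx
  obtain ⟨c, rfl⟩ := Submodule.mem_span_singleton.1 hx
  rw [map_smul, permRep_allOnes]
  exact Submodule.smul_mem _ _ (Submodule.mem_span_singleton_self _)

/-- The quotient `V = F_p[X]/D` of the permutation representation by the all-ones line. -/
noncomputable def stdQuotRep (p n : ℕ) :
    Representation (ZMod p) (Equiv.Perm (Fin n)) ((Fin n →₀ ZMod p) ⧸ allOnesLine p n) :=
  (permRep p n).quot (allOnesLine p n) (allOnesLine_invariant p n)

open Equiv Equiv.Perm groupCohomology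

section SignCocycle

variable {α A : Type*} [DecidableEq α] [AddCommGroup A]

lemma map_swap_eq_of_map_mul {φ : Perm α → A} (hφ : ∀ σ τ, φ (σ * τ) = φ σ + φ τ)
    {a b x y : α} (hab : a ≠ b) (hxy : x ≠ y) : φ (swap x y) = φ (swap a b) := by
  obtain ⟨g, hg⟩ := isConj_swap hxy hab
  have := congrArg φ hg.eq
  rwa [hφ, hφ, add_comm (φ (swap a b)), add_left_cancel_iff] at this

variable [Fintype α]

def signCocycle (c : A) (σ : Perm α) : A := if sign σ = 1 then 0 else c

lemma signCocycle_mul {c : A} (hc : c + c = 0) (σ τ : Perm α) :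
    signCocycle c (σ * τ) = signCocycle c σ + signCocycle c τ := by
  unfold signCocycle
  rcases Int.units_eq_one_or (sign σ) with hσ | hσ <;>
    rcases Int.units_eq_one_or (sign τ) with hτ | hτ <;> simp [hσ, hτ, hc]

/-- The transpositions generate `Perm α` and are all conjugate. -/
lemma exists_eq_signCocycle {φ : Perm α → A} (hφ : ∀ σ τ, φ (σ * τ) = φ σ + φ τ) :
    ∃ c : A, c + c = 0 ∧ φ = signCocycle c := by
  have h1 : φ 1 = 0 := by simpa using hφ 1 1
  by_cases hα : ∃ a b : α, a ≠ b
  · obtain ⟨a, b, hab⟩ := hα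
    have hc : φ (swap a b) + φ (swap a b) = 0 := by rw [← hφ, swap_mul_self, h1]
    refine ⟨φ (swap a b), hc, funext fun σ ↦ ?_⟩
    induction σ using swap_induction_on with
    | one => simp [signCocycle, h1]
    | swap_mul σ x y hxy ih =>
      rw [hφ, map_swap_eq_of_map_mul hφ hab hxy, ih, signCocycle_mul hc]
      simp [signCocycle, sign_swap hxy]
  · push Not at hα
    refine ⟨0, add_zero 0, funext fun σ ↦ ?_⟩
    rw [show σ = 1 from Perm.ext fun x ↦ hα _ _, h1]
    simp [signCocycle]

end SignCocycle

section Transport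

variable {k G M N : Type} [CommRing k] [Group G] [AddCommGroup M] [Module k M]
  [AddCommGroup N] [Module k N] {ρ : Representation k G M} {π : Representation k G N}
  (φ : M →ₗ[k] N) (hφ : ∀ g x, φ (ρ g x) = π g (φ x))
include hφ

lemma comp_mem_cocycles₁ {f : G → M} (hf : f ∈ cocycles₁ (Rep.of ρ)) :
    φ ∘ f ∈ cocycles₁ (Rep.of π) := by
  rw [mem_cocycles₁_iff] at hf ⊢
  intro g h
  simp only [Function.comp_apply, hf g h, map_add, hφ]

lemma comp_mem_coboundaries₁ {f : G → M} (hf : f ∈ coboundaries₁ (Rep.of ρ)) :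
    φ ∘ f ∈ coboundaries₁ (Rep.of π) := by
  obtain ⟨x, rfl⟩ := hf
  refine ⟨φ x, funext fun g ↦ ?_⟩
  change π g (φ x) - φ x = φ (ρ g x - x)
  rw [map_sub, hφ]

end Transport

section PermutationModule

variable {p n : ℕ}

lemma permRep_apply (σ : Perm (Fin n)) (w : Fin n →₀ ZMod p) (x : Fin n) :
    permRep p n σ w x = w (σ⁻¹ x) := by
  change Finsupp.mapDomain σ w x = _
  rw [← Finsupp.mapDomain_apply σ.injective w (σ⁻¹ x), Perm.coe_inv, apply_symm_apply]

lemma allOnes_apply (x : Fin n) : allOnes p n x = 1 := by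
  simp [allOnes, Finsupp.finsetSum_apply, Finsupp.single_apply]

/-- The injective half of Shapiro's lemma for `permRep p n = F_p[S_n / S_{n-1}]`. -/
lemma mem_coboundaries₁_of_apply_eq_zero {F : Perm (Fin n) → Fin n →₀ ZMod p}
    (hF : F ∈ cocycles₁ (Rep.of (permRep p n))) (x₀ : Fin n)
    (h₀ : ∀ σ, σ x₀ = x₀ → F σ x₀ = 0) : F ∈ coboundaries₁ (Rep.of (permRep p n)) := by
  rw [mem_cocycles₁_iff] at hF
  let v : Fin n →₀ ZMod p := Finsupp.equivFunOnFinite.symm fun x ↦ F (swap x₀ x) x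
  have hv : ∀ σ y, F σ (σ y) = v (σ y) - v y := by
    intro σ y
    -- `swap x₀ (σ y)` and `σ * swap x₀ y` both send `x₀` to `σ y`, so they differ by `h ∈ Stab x₀`
    set h := swap x₀ y * σ⁻¹ * swap x₀ (σ y)
    have hh : h x₀ = x₀ := by simp [h]
    have key := congrArg (· (σ y)) (hF σ (swap x₀ y * h))
    rw [hF (swap x₀ y) h, show σ * (swap x₀ y * h) = swap x₀ (σ y) by simp [h, ← mul_assoc]]
      at key
    simp only [Finsupp.add_apply, permRep_apply, Perm.coe_inv, symm_apply_apply, swap_inv,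
      swap_apply_right, h₀ h hh, zero_add] at key
    change v (σ y) = v y + F σ (σ y) at key
    rw [key]; ring
  refine ⟨-v, funext fun σ ↦ Finsupp.ext fun x ↦ ?_⟩
  change permRep p n σ (-v) x - (-v) x = F σ x
  obtain ⟨y, rfl⟩ := σ.surjective x
  rw [hv, permRep_apply, Perm.coe_inv, symm_apply_apply, Finsupp.neg_apply, Finsupp.neg_apply]
  ring

lemma exists_apply_eq_signCocycle {F : Perm (Fin n) → Fin n →₀ ZMod p}
    (hF : F ∈ cocycles₁ (Rep.of (permRep p n))) (x₀ : Fin n) :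
    ∃ c : ZMod p, c + c = 0 ∧ ∀ σ, σ x₀ = x₀ → F σ x₀ = signCocycle c σ := by
  rw [mem_cocycles₁_iff] at hF
  have hfix (π : Perm {x // x ≠ x₀}) : ofSubtype π x₀ = x₀ :=
    ofSubtype_apply_of_not_mem π (not_not.2 rfl)
  -- the homomorphism `S_{n-1} → F_p` that Shapiro's lemma attaches to `F`
  obtain ⟨c, hc, hφ⟩ := exists_eq_signCocycle (φ := fun π : Perm {x // x ≠ x₀} ↦
    F (ofSubtype π) x₀) fun π π' ↦ by
      rw [map_mul, hF, Finsupp.add_apply, Rep.of_ρ, permRep_apply,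
        Perm.inv_eq_iff_eq.2 (hfix π).symm, add_comm]
  refine ⟨c, hc, fun σ hσ ↦ ?_⟩
  have h₁ : ∀ x, σ x ≠ x₀ ↔ x ≠ x₀ := fun x ↦ by
    simpa [hσ] using σ.injective.ne_iff (x := x) (y := x₀)
  have h₂ : ∀ x, σ x ≠ x → x ≠ x₀ := fun x hx h ↦ hx (h ▸ hσ)
  have := congrFun hφ (σ.subtypePerm h₁)
  simp only [ofSubtype_subtypePerm h₁ h₂] at this
  rw [this, signCocycle, signCocycle, sign_subtypePerm σ h₁ h₂]

lemma signCocycle_smul_allOnes_mem_cocycles₁ {c : ZMod p} (hc : c + c = 0) :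
    (fun σ ↦ signCocycle c σ • allOnes p n) ∈ cocycles₁ (Rep.of (permRep p n)) := by
  rw [mem_cocycles₁_iff]
  intro σ τ
  simp only [map_smul, permRep_allOnes, signCocycle_mul hc, add_smul, add_comm]

lemma exists_sub_signCocycle_smul_allOnes_mem_coboundaries₁ (hn : 0 < n)
    {F : Perm (Fin n) → Fin n →₀ ZMod p} (hF : F ∈ cocycles₁ (Rep.of (permRep p n))) :
    ∃ c : ZMod p, c + c = 0 ∧
      (fun σ ↦ F σ - signCocycle c σ • allOnes p n) ∈ coboundaries₁ (Rep.of (permRep p n)) := by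
  let x₀ : Fin n := ⟨0, hn⟩
  obtain ⟨c, hc, hFc⟩ := exists_apply_eq_signCocycle hF x₀
  refine ⟨c, hc, mem_coboundaries₁_of_apply_eq_zero
    (sub_mem hF (signCocycle_smul_allOnes_mem_cocycles₁ hc)) x₀ fun σ hσ ↦ ?_⟩
  simp [hFc σ hσ, allOnes_apply]

end PermutationModule

section Splitting

noncomputable def coeffSum (p n : ℕ) : (Fin n →₀ ZMod p) →ₗ[ZMod p] ZMod p :=
  Finsupp.lsum (ZMod p) fun _ ↦ LinearMap.id

noncomputable def allOnesCompl (p n : ℕ) : (Fin n →₀ ZMod p) →ₗ[ZMod p] (Fin n →₀ ZMod p) :=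
  LinearMap.id - (coeffSum p n).smulRight ((n : ZMod p)⁻¹ • allOnes p n)

variable {p n : ℕ}

lemma coeffSum_allOnes : coeffSum p n (allOnes p n) = n := by
  simp [allOnes, coeffSum]

lemma coeffSum_permRep (σ : Perm (Fin n)) (w : Fin n →₀ ZMod p) :
    coeffSum p n (permRep p n σ w) = coeffSum p n w := by
  induction w using Finsupp.induction_linear with
  | zero => simp
  | add f g hf hg => rw [map_add, map_add, map_add, hf, hg]
  | single i c =>
    change coeffSum p n (Finsupp.mapDomain _ _) = _
    simp [coeffSum]

lemma allOnesCompl_apply (w : Fin n →₀ ZMod p) :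
    allOnesCompl p n w = w - coeffSum p n w • (n : ZMod p)⁻¹ • allOnes p n := rfl

lemma allOnesCompl_permRep (σ : Perm (Fin n)) (w : Fin n →₀ ZMod p) :
    allOnesCompl p n (permRep p n σ w) = permRep p n σ (allOnesCompl p n w) := by
  rw [allOnesCompl_apply, allOnesCompl_apply, map_sub, map_smul, map_smul, permRep_allOnes,
    coeffSum_permRep]

variable [Fact p.Prime]

lemma allOnesLine_le_ker_allOnesCompl (hn : (n : ZMod p) ≠ 0) :
    allOnesLine p n ≤ LinearMap.ker (allOnesCompl p n) := by
  rw [allOnesLine, Submodule.span_le, Set.singleton_subset_iff, SetLike.mem_coe,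
    LinearMap.mem_ker, allOnesCompl_apply, coeffSum_allOnes, smul_smul, mul_inv_cancel₀ hn,
    one_smul, sub_self]

noncomputable def stdQuotSection (hn : (n : ZMod p) ≠ 0) :
    ((Fin n →₀ ZMod p) ⧸ allOnesLine p n) →ₗ[ZMod p] (Fin n →₀ ZMod p) :=
  (allOnesLine p n).liftQ (allOnesCompl p n) (allOnesLine_le_ker_allOnesCompl hn)

lemma mkQ_stdQuotSection (hn : (n : ZMod p) ≠ 0) (v : (Fin n →₀ ZMod p) ⧸ allOnesLine p n) :
    (allOnesLine p n).mkQ (stdQuotSection hn v) = v := by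
  obtain ⟨w, rfl⟩ := Submodule.Quotient.mk_surjective _ v
  rw [stdQuotSection, Submodule.liftQ_apply, allOnesCompl_apply, Submodule.mkQ_apply,
    Submodule.Quotient.eq, sub_sub_cancel_left]
  exact neg_mem (Submodule.smul_mem _ _ (Submodule.smul_mem _ _
    (Submodule.mem_span_singleton_self _)))

lemma stdQuotSection_stdQuotRep (hn : (n : ZMod p) ≠ 0) (σ : Perm (Fin n))
    (v : (Fin n →₀ ZMod p) ⧸ allOnesLine p n) :
    stdQuotSection hn (stdQuotRep p n σ v) = permRep p n σ (stdQuotSection hn v) := by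
  obtain ⟨w, rfl⟩ := Submodule.Quotient.mk_surjective _ v
  exact allOnesCompl_permRep σ w

end Splitting

theorem subsingleton_H1_stdQuotRep {p n : ℕ} (hp : p.Prime) (hpn : ¬ p ∣ n) :
    Subsingleton (H1 (Rep.of (stdQuotRep p n))) := by
  have : Fact p.Prime := ⟨hp⟩
  have hn : (n : ZMod p) ≠ 0 := by rwa [Ne, ZMod.natCast_eq_zero_iff]
  have hn₀ : 0 < n := Nat.pos_of_ne_zero fun h ↦ hpn (h ▸ dvd_zero p)
  refine subsingleton_of_forall_eq 0 fun a ↦ ?_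
  induction a using H1_induction_on with | h f => ?_
  rw [H1π_eq_zero_iff]
  have hF := comp_mem_cocycles₁ _ (stdQuotSection_stdQuotRep hn) f.2
  obtain ⟨c, -, hcob⟩ := exists_sub_signCocycle_smul_allOnes_mem_coboundaries₁ hn₀ hF
  convert comp_mem_coboundaries₁ (π := stdQuotRep p n) (allOnesLine p n).mkQ (fun _ _ ↦ rfl) hcob
    using 1
  funext σ
  have hD : (allOnesLine p n).mkQ (allOnes p n) = 0 :=
    (Submodule.Quotient.mk_eq_zero _).2 (Submodule.mem_span_singleton_self _)
  simp only [Function.comp_apply, map_sub, map_smul, hD, smul_zero, sub_zero, mkQ_stdQuotSection]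
  rfl

theorem statement1_general (p n : ℕ) (hp : p.Prime) (hpn : ¬ p ∣ n) :
    (Odd p → Subsingleton (groupCohomology.H1 (Rep.of (stdQuotRep p n)))) ∧
    (p = 2 → 3 ≤ n → Subsingleton (groupCohomology.H1 (Rep.of (stdQuotRep p n)))) :=
  ⟨fun _ ↦ subsingleton_H1_stdQuotRep hp hpn, fun _ _ ↦ subsingleton_H1_stdQuotRep hp hpn⟩

/-- Let `p` be a prime with `p ∤ n` and `V = F_p^n / span(1,…,1)` the
quotient of the permutation representation of `S_n`.  If `p` is odd then `H¹(S_n, V) = 0`,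
and if `p = 2` and `n ≥ 3` then `H¹(S_n, V) = 0`. -/
theorem statement1 (p n : ℕ) (hp : p.Prime) (hn : 0 < n) (hpn : ¬ p ∣ n) :
    (Odd p → Subsingleton (groupCohomology.H1 (Rep.of (stdQuotRep p n)))) ∧
    (p = 2 → 3 ≤ n → Subsingleton (groupCohomology.H1 (Rep.of (stdQuotRep p n)))) :=
  statement1_general p n hp hpn
end

section
/- Let (V, q) be a metabolic quadratic space over F_2 of dimension 2n, i.e., q : V → F_2 is a quadratic form whose associated bilinear form is nondegenerate and V contains a Lagrangian subspace. For any Lagrangian subspace X of V, the number of Lagrangian subspaces Y of V with Y ∩ X = {0} equals 2^{n(n−1)/2}. -/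
/-!
Fix a complement `W` of the Lagrangian `X`. The complements of `X` are exactly the graphs
`{w + f w}` of linear maps `f : W → X`, and since `Q` vanishes on `X`,
`Q (w + f w) = Q w + B (f w) w` with `B` the polar form. The polar form identifies `X` with the
dual of `W`, hence maps `f` with bilinear forms `β` on `W`, and the graph of `f` is isotropic iff
`β` induces the quadratic form `-Q|_W`. This is a fibre of the surjective additive map
`β ↦ β.toQuadraticMap`, whose kernel consists of the alternating forms; an alternating form is
freely determined by its values `β (e i) (e j)`, `i < j`, on a basis, so there are
`|K| ^ (n.choose 2)` of them.
-/

open Module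

theorem Nat.card_subtype_fst_lt_snd {ι : Type*} [LinearOrder ι] [Fintype ι] :
    Nat.card {p : ι × ι // p.1 < p.2} = (Fintype.card ι).choose 2 := by
  classical
  rw [Nat.card_eq_fintype_card, Fintype.card_subtype, ← Finset.univ_product_univ,
    Finset.card_product_filter_lt, Finset.card_univ]

namespace LinearMap.BilinForm

variable {R M ι : Type*} [CommRing R] [AddCommGroup M] [Module R M] [LinearOrder ι]

theorem IsAlt.ext_basis {β γ : LinearMap.BilinForm R M} (hβ : β.IsAlt) (hγ : γ.IsAlt)
    (b : Basis ι R M) (h : ∀ i j, i < j → β (b i) (b j) = γ (b i) (b j)) : β = γ := by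
  refine b.ext fun i => b.ext fun j => ?_
  rcases lt_trichotomy i j with hij | rfl | hij
  · exact h i j hij
  · rw [hβ.self_eq_zero, hγ.self_eq_zero]
  · rw [← hβ.neg_eq, ← hγ.neg_eq, h j i hij]

theorem exists_isAlt_apply_basis_eq [Fintype ι] (b : Basis ι R M)
    (c : {p : ι × ι // p.1 < p.2} → R) :
    ∃ β : LinearMap.BilinForm R M, β.IsAlt ∧ ∀ p, β (b p.1.1) (b p.1.2) = c p := by
  classical
  -- `γ - γ.flip` is alternating for every `γ`; an upper-triangular `γ` gives the values `c`.
  let γ := Matrix.toBilin b (Matrix.of fun i j => if h : i < j then c ⟨(i, j), h⟩ else 0)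
  have hγ : ∀ i j, γ (b i) (b j) = if h : i < j then c ⟨(i, j), h⟩ else 0 := fun i j => by
    rw [← toMatrix_apply b, toMatrix_toBilin, Matrix.of_apply]
  refine ⟨γ - γ.flip, fun x => by simp, fun ⟨(i, j), hij⟩ => ?_⟩
  simp only [sub_apply, flip_apply, hγ, dif_pos hij, dif_neg hij.not_gt, sub_zero]

theorem card_isAlt [Fintype ι] [Finite R] (b : Basis ι R M) :
    Nat.card {β : LinearMap.BilinForm R M // β.IsAlt} =
      Nat.card R ^ (Fintype.card ι).choose 2 := by
  let values (β : {β : LinearMap.BilinForm R M // β.IsAlt})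
      (p : {p : ι × ι // p.1 < p.2}) : R :=
    β.1 (b p.1.1) (b p.1.2)
  have hbij : Function.Bijective values := by
    refine ⟨fun β γ h => Subtype.ext <| β.2.ext_basis γ.2 b fun i j hij =>
      congrFun h ⟨(i, j), hij⟩, fun c => ?_⟩
    obtain ⟨β, hβ, hc⟩ := exists_isAlt_apply_basis_eq b c
    exact ⟨⟨β, hβ⟩, funext hc⟩
  rw [Nat.card_congr (Equiv.ofBijective values hbij), Nat.card_fun,
    Nat.card_subtype_fst_lt_snd]

theorem card_toQuadraticMap_eq [Module.Free R M] (Q : QuadraticForm R M) :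
    Nat.card {β : LinearMap.BilinForm R M // β.toQuadraticMap = Q} =
      Nat.card {β : LinearMap.BilinForm R M // β.IsAlt} := by
  obtain ⟨β₀, rfl⟩ := BilinMap.toQuadraticMap_surjective Q
  exact Nat.card_congr <| (Equiv.subRight β₀).subtypeEquiv fun β => by
    rw [Equiv.subRight_apply, IsAlt, ← BilinMap.toQuadraticMap_eq_zero,
      BilinMap.toQuadraticMap_sub, sub_eq_zero]

end LinearMap.BilinForm

namespace Submodule

variable {R E : Type*} [Ring R] [AddCommGroup E] [Module R E] {X W Y : Submodule R E}

def graphOver (f : W →ₗ[R] X) : Submodule R E :=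
  LinearMap.range (W.subtype + X.subtype ∘ₗ f)

theorem mem_graphOver {f : W →ₗ[R] X} {v : E} :
    v ∈ graphOver f ↔ ∃ w : W, (w : E) + f w = v :=
  Iff.rfl

theorem forall_mem_graphOver {f : W →ₗ[R] X} {p : E → Prop} :
    (∀ v ∈ graphOver f, p v) ↔ ∀ w : W, p (w + f w) :=
  ⟨fun h w => h _ ⟨w, rfl⟩, fun h _ ⟨w, hw⟩ => hw ▸ h w⟩

theorem isCompl_graphOver (h : IsCompl X W) (f : W →ₗ[R] X) : IsCompl X (graphOver f) := by
  constructor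
  · rw [disjoint_def]
    rintro _ hv ⟨w, rfl⟩
    have hw : (w : E) ∈ X := by simpa using sub_mem hv (f w).2
    obtain rfl : w = 0 := Subtype.ext (disjoint_def.1 h.disjoint _ hw w.2)
    simp
  · rw [codisjoint_iff, eq_top_iff, ← h.sup_eq_top, sup_le_iff]
    refine ⟨le_sup_left, fun w hw => ?_⟩
    have hgraph : w + (f ⟨w, hw⟩ : E) ∈ X ⊔ graphOver f :=
      mem_sup_right ⟨⟨w, hw⟩, rfl⟩
    simpa using sub_mem hgraph (mem_sup_left (f ⟨w, hw⟩).2)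

theorem graphOver_injective (h : Disjoint X W) :
    Function.Injective (graphOver : (W →ₗ[R] X) → Submodule R E) := by
  intro f g hfg
  ext w : 1
  obtain ⟨w', hw'⟩ := mem_graphOver.1 (hfg ▸ ⟨w, rfl⟩ : (w : E) + f w ∈ graphOver g)
  have hX : (w' : E) - w ∈ X := by
    rw [show (w' : E) - w = f w - g w' by rw [sub_eq_sub_iff_add_eq_add, hw', add_comm]]
    exact sub_mem (f w).2 (g w').2
  obtain rfl : w' = w :=
    Subtype.ext <| sub_eq_zero.1 <| disjoint_def.1 h _ hX (sub_mem w'.2 w.2)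
  exact Subtype.ext (add_left_cancel hw').symm

theorem exists_graphOver_eq (h : IsCompl X W) (hY : IsCompl X Y) :
    ∃ f : W →ₗ[R] X, graphOver f = Y := by
  refine ⟨-(X.projectionOnto Y hY ∘ₗ W.subtype), ?_⟩
  refine (le_iff_eq_of_codisjoint_of_disjoint (isCompl_graphOver h _).symm.codisjoint
    hY.disjoint).1 (forall_mem_graphOver.2 fun w => ?_)
  simpa [← sub_eq_add_neg] using sub_projection_mem hY w

end Submodule

namespace QuadraticMap

open Submodule

section CommRing

variable {R M N : Type*} [CommRing R] [AddCommGroup M] [Module R M] [AddCommGroup N]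
  [Module R N] {Q : QuadraticMap R M N} {Y : Submodule R M}

theorem polar_eq_zero_of_isotropic (hY : ∀ y ∈ Y, Q y = 0) {u v : M} (hu : u ∈ Y)
    (hv : v ∈ Y) : polar Q u v = 0 := by
  rw [polar, hY _ (add_mem hu hv), hY u hu, hY v hv, sub_zero, sub_zero]

theorem map_add_eq_of_isotropic (hY : ∀ y ∈ Y, Q y = 0) (u : M) {v : M} (hv : v ∈ Y) :
    Q (u + v) = Q u + polar Q v u := by
  rw [polar_comm, polar, hY v hv]
  abel

def IsLagrangian (Q : QuadraticForm R M) (Y : Submodule R M) : Prop :=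
  (∀ y ∈ Y, Q y = 0) ∧ Y = LinearMap.BilinForm.orthogonal Q.polarBilin Y

theorem injective_polarBilin_compl₁₂ {Q : QuadraticForm R M}
    (hnd : LinearMap.BilinForm.Nondegenerate Q.polarBilin) {X W : Submodule R M}
    (hX : ∀ x ∈ X, Q x = 0) (h : IsCompl X W) :
    Function.Injective (Q.polarBilin.compl₁₂ X.subtype W.subtype) := by
  refine (injective_iff_map_eq_zero _).2 fun x hx => Subtype.ext <| hnd.1 _ fun v => ?_
  obtain ⟨x', hx', w, hw, rfl⟩ := mem_sup.1 (h.sup_eq_top ▸ mem_top : v ∈ X ⊔ W)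
  have hxw : Q.polarBilin x w = 0 := LinearMap.congr_fun hx ⟨w, hw⟩
  have hxx' : Q.polarBilin x x' = 0 := polar_eq_zero_of_isotropic hX x.2 hx'
  rw [map_add, hxw, hxx', add_zero]

end CommRing

variable {K V : Type*} [Field K] [AddCommGroup V] [Module K V] [FiniteDimensional K V]
  {Q : QuadraticForm K V} {X W Y : Submodule K V}

theorem isLagrangian_iff (hnd : LinearMap.BilinForm.Nondegenerate Q.polarBilin) :
    Q.IsLagrangian Y ↔ (∀ y ∈ Y, Q y = 0) ∧ 2 * finrank K Y = finrank K V := by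
  have hperp := LinearMap.BilinForm.finrank_orthogonal hnd Y
  have hle := Y.finrank_le
  refine and_congr_right fun hY => ⟨fun hYperp => by rw [← hYperp] at hperp; omega,
    fun hdim => eq_of_le_of_finrank_eq (fun u hu => ?_) (by omega)⟩
  exact LinearMap.BilinForm.mem_orthogonal_iff.2 fun v hv => polar_eq_zero_of_isotropic hY hv hu

theorem isLagrangian_and_inf_eq_bot_iff (hnd : LinearMap.BilinForm.Nondegenerate Q.polarBilin)
    (hX : Q.IsLagrangian X) :
    Q.IsLagrangian Y ∧ Y ⊓ X = ⊥ ↔ (∀ y ∈ Y, Q y = 0) ∧ IsCompl X Y := by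
  have hXdim := ((isLagrangian_iff hnd).1 hX).2
  rw [isLagrangian_iff hnd, and_assoc, ← disjoint_iff, disjoint_comm]
  refine and_congr_right fun _ => ⟨fun ⟨hYdim, hdisj⟩ => ?_, fun hcompl => ?_⟩
  · exact (isCompl_iff_disjoint _ _ (by omega)).2 hdisj
  · have := finrank_add_eq_of_isCompl hcompl
    exact ⟨by omega, hcompl.disjoint⟩

noncomputable def IsLagrangian.dualEquivOfIsCompl
    (hnd : LinearMap.BilinForm.Nondegenerate Q.polarBilin) (hX : Q.IsLagrangian X)
    (h : IsCompl X W) : X ≃ₗ[K] Dual K W :=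
  (Q.polarBilin.compl₁₂ X.subtype W.subtype).linearEquivOfInjective
    (injective_polarBilin_compl₁₂ hnd hX.1 h) <| by
      have := finrank_add_eq_of_isCompl h
      have := ((isLagrangian_iff hnd).1 hX).2
      rw [Subspace.dual_finrank_eq]
      omega

theorem card_isLagrangian_inf_eq_bot_eq_card_isotropic_graphs
    (hnd : LinearMap.BilinForm.Nondegenerate Q.polarBilin) (hX : Q.IsLagrangian X)
    (hW : IsCompl X W) :
    Nat.card {Y : Submodule K V // Q.IsLagrangian Y ∧ Y ⊓ X = ⊥} =
      Nat.card {f : W →ₗ[K] X // ∀ w : W, Q (w + f w) = 0} := by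
  symm
  refine Nat.card_congr (Equiv.ofBijective (fun f => ⟨graphOver f.1, ?_⟩) ⟨?_, ?_⟩)
  · exact (isLagrangian_and_inf_eq_bot_iff hnd hX).2
      ⟨forall_mem_graphOver.2 f.2, isCompl_graphOver hW f.1⟩
  · exact fun f g hfg => Subtype.ext (graphOver_injective hW.disjoint (congrArg Subtype.val hfg))
  · rintro ⟨Y, hY⟩
    obtain ⟨hYq, hXY⟩ := (isLagrangian_and_inf_eq_bot_iff hnd hX).1 hY
    obtain ⟨f, rfl⟩ := exists_graphOver_eq hW hXY
    exact ⟨⟨f, forall_mem_graphOver.1 hYq⟩, rfl⟩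

theorem card_isLagrangian_inf_eq_bot [Finite K]
    (hnd : LinearMap.BilinForm.Nondegenerate Q.polarBilin) (hX : Q.IsLagrangian X) :
    Nat.card {Y : Submodule K V // Q.IsLagrangian Y ∧ Y ⊓ X = ⊥} =
      Nat.card K ^ (finrank K X).choose 2 := by
  obtain ⟨W, hW⟩ := X.exists_isCompl
  have hWX : finrank K W = finrank K X := by
    have := finrank_add_eq_of_isCompl hW
    have := ((isLagrangian_iff hnd).1 hX).2
    omega
  -- `Φ f w w' = polar Q (f w) w'`
  let Φ := LinearEquiv.congrRight (M := W) (hX.dualEquivOfIsCompl hnd hW)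
  calc _ = Nat.card {f : W →ₗ[K] X // ∀ w : W, Q (w + f w) = 0} :=
        card_isLagrangian_inf_eq_bot_eq_card_isotropic_graphs hnd hX hW
    _ = Nat.card {β : LinearMap.BilinForm K W // β.toQuadraticMap = -(Q.comp W.subtype)} :=
        Nat.card_congr <| Φ.toEquiv.subtypeEquiv fun f => by
          rw [QuadraticMap.ext_iff]
          refine forall_congr' fun w => ?_
          rw [map_add_eq_of_isotropic hX.1 _ (f w).2, neg_apply, comp_apply,
            LinearMap.BilinMap.toQuadraticMap_apply, eq_neg_iff_add_eq_zero, add_comm]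
          rfl
    _ = Nat.card {β : LinearMap.BilinForm K W // β.IsAlt} :=
        LinearMap.BilinForm.card_toQuadraticMap_eq _
    _ = _ := by rw [LinearMap.BilinForm.card_isAlt (finBasis K W), Fintype.card_fin, hWX]

end QuadraticMap

/-- Let `(V, q)` be a metabolic quadratic space over `F_2` of dimension `2n`
(the polar bilinear form of `q` is nondegenerate and `V` has a Lagrangian subspace).  For any
Lagrangian subspace `X` of `V`, the number of Lagrangian subspaces `Y` with `Y ∩ X = 0`
equals `2 ^ (n (n - 1) / 2)`. -/
theorem statement5 (V : Type) [AddCommGroup V] [Module (ZMod 2) V]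
    [FiniteDimensional (ZMod 2) V] (n : ℕ)
    (hdim : Module.finrank (ZMod 2) V = 2 * n)
    (q : QuadraticForm (ZMod 2) V)
    (hnd : LinearMap.BilinForm.Nondegenerate q.polarBilin)
    (X : Submodule (ZMod 2) V)
    (hXq : ∀ x ∈ X, q x = 0)
    (hXlag : X = LinearMap.BilinForm.orthogonal q.polarBilin X) :
    Nat.card {Y : Submodule (ZMod 2) V //
        (∀ y ∈ Y, q y = 0) ∧ Y = LinearMap.BilinForm.orthogonal q.polarBilin Y ∧ Y ⊓ X = ⊥} =
      2 ^ (n * (n - 1) / 2) := by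
  have hX : q.IsLagrangian X := ⟨hXq, hXlag⟩
  have hXdim : finrank (ZMod 2) X = n := by
    have := ((QuadraticMap.isLagrangian_iff hnd).1 hX).2
    omega
  have hcount := QuadraticMap.card_isLagrangian_inf_eq_bot hnd hX
  rw [Nat.card_zmod, hXdim, Nat.choose_two_right] at hcount
  rw [← hcount]
  exact Nat.card_congr (Equiv.subtypeEquivRight fun _ => and_assoc.symm)
end

section
/- Let B be a finite abelian group equipped with a nondegenerate alternating pairing B × B → Q/Z. Then dim_{F_2} B[2] is even. -/
open AddSubgroup

namespace Statement6Aux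

/-- Every `n`-torsion point of `ℚ/ℤ` is a natural multiple of `1/n`. -/
lemma torsion_rep {n : ℕ} (hn : 0 < n) (u : AddCircle (1 : ℚ)) (hu : n • u = 0) :
    ∃ m : ℕ, u = m • (((1 / (n : ℚ) : ℚ)) : AddCircle (1 : ℚ)) := by
  haveI : Fact ((0:ℚ) < 1) := ⟨one_pos⟩
  have hfin : IsOfFinAddOrder u := isOfFinAddOrder_iff_nsmul_eq_zero.2 ⟨n, hn, hu⟩
  obtain ⟨m, hg, hlt, he⟩ := AddCircle.exists_gcd_eq_one_of_isOfFinAddOrder hfin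
  set d := addOrderOf u with hd
  have hdvd : d ∣ n := addOrderOf_dvd_of_nsmul_eq_zero hu
  have hd0 : 0 < d := hfin.addOrderOf_pos
  refine ⟨m * (n / d), ?_⟩
  rw [← AddCircle.coe_nsmul, ← he]
  congr 1
  have hq : ((n / d : ℕ) : ℚ) * (d : ℚ) = (n : ℚ) := by
    rw_mod_cast [Nat.div_mul_cancel hdvd]
  have hn0 : (n : ℚ) ≠ 0 := Nat.cast_ne_zero.2 hn.ne'
  have hd0' : (d : ℚ) ≠ 0 := Nat.cast_ne_zero.2 hd0.ne'
  rw [nsmul_eq_mul, mul_one]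
  push_cast
  rw [mul_one_div, div_eq_div_iff hd0' hn0, ← hq]
  ring

lemma skew {V : Type} [AddCommGroup V] (e : V →+ V →+ AddCircle (1:ℚ))
    (halt : ∀ x, e x x = 0) (a b : V) : e a b = - e b a := by
  have h := halt (a + b)
  simp only [map_add, AddMonoidHom.add_apply, halt a, halt b, zero_add, add_zero] at h
  exact eq_neg_of_add_eq_zero_right h

lemma valsmul {n : ℕ} [NeZero n] {V : Type} [AddCommGroup V] (v : V) (hv : n • v = 0)
    (a b : ZMod n) : ((a + b).val) • v = a.val • v + b.val • v := by
  rw [ZMod.val_add, ← add_nsmul]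
  conv_rhs => rw [← Nat.mod_add_div (a.val + b.val) n, add_nsmul, mul_nsmul, hv, smul_zero,
    add_zero]


theorem key : ∀ (N : ℕ) (V : Type) [AddCommGroup V] [Finite V], Nat.card V = N →
    ∀ (e : V →+ V →+ AddCircle (1 : ℚ)), (∀ x, e x x = 0) → (∀ x, (∀ y, e x y = 0) → x = 0) →
    ∃ (A : Type) (_ : AddCommGroup A) (_ : Finite A), Nonempty (V ≃+ A × A) := by
  intro N
  induction N using Nat.strong_induction_on with
  | _ N ih =>
  intro V _ _ hcard e halt hnd
  by_cases hV : ∀ v : V, v = 0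
  · refine ⟨V, inferInstance, inferInstance, ⟨{
      toFun := fun v => (v, v)
      invFun := Prod.fst
      left_inv := fun v => rfl
      right_inv := fun p => Prod.ext rfl ((hV p.1).trans (hV p.2).symm)
      map_add' := fun a b => rfl }⟩⟩
  push_neg at hV
  obtain ⟨v₀, hv₀⟩ := hV
  haveI : Fact ((0:ℚ) < 1) := ⟨one_pos⟩
  set n := AddMonoid.exponent V with hn
  have hexp : ∀ v : V, n • v = 0 := fun v => AddMonoid.exponent_nsmul_eq_zero v
  have hn0 : n ≠ 0 := AddMonoid.ExponentExists.of_finite.exponent_ne_zero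
  have hn1 : n ≠ 1 := by
    intro h
    apply hv₀
    have := hexp v₀
    rwa [h, one_nsmul] at this
  have hn2 : 2 ≤ n := by omega
  haveI : NeZero n := ⟨hn0⟩
  obtain ⟨x, hx⟩ := AddMonoid.exists_addOrderOf_eq_exponent (AddMonoid.ExponentExists.of_finite (G := V))
  -- the generator of the n-torsion of ℚ/ℤ
  set c₀ : AddCircle (1:ℚ) := ((1 / (n : ℚ) : ℚ) : AddCircle (1:ℚ)) with hc₀
  have hc₀ord : addOrderOf c₀ = n := AddCircle.addOrderOf_period_div (Nat.pos_of_ne_zero hn0)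
  -- the embedding θ : ZMod n → ℚ/ℤ
  have hnc₀ : zmultiplesHom (AddCircle (1:ℚ)) c₀ (n : ℤ) = 0 := by
    have : (n : ℤ) • c₀ = 0 := by
      rw [natCast_zsmul]
      exact addOrderOf_dvd_iff_nsmul_eq_zero.mp (hc₀ord ▸ dvd_refl n)
    simpa [zmultiplesHom_apply] using this
  set θ : ZMod n →+ AddCircle (1:ℚ) := ZMod.lift n ⟨zmultiplesHom _ c₀, hnc₀⟩ with hθ
  have hθcoe : ∀ k : ℤ, θ ((k : ℤ) : ZMod n) = k • c₀ := by
    intro k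
    rw [hθ, ZMod.lift_coe]
    simp [zmultiplesHom_apply]
  have hθnat : ∀ m : ℕ, θ ((m : ℕ) : ZMod n) = m • c₀ := by
    intro m
    have := hθcoe (m : ℤ)
    rwa [Int.cast_natCast, natCast_zsmul] at this
  have θinj : Function.Injective θ := by
    rw [injective_iff_map_eq_zero]
    intro z hz
    have hzv : ((z.val : ℕ) : ZMod n) = z := by
      rw [ZMod.natCast_val, ZMod.cast_id]
    rw [← hzv, hθnat] at hz
    have hdv : n ∣ z.val := by
      have h' := addOrderOf_dvd_of_nsmul_eq_zero hz
      rwa [hc₀ord] at h'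
    have hz0 : z.val = 0 := Nat.eq_zero_of_dvd_of_lt hdv (ZMod.val_lt z)
    rw [← hzv, hz0, Nat.cast_zero]
  have hθsurj : ∀ u : AddCircle (1:ℚ), n • u = 0 → ∃ z : ZMod n, θ z = u := by
    intro u hu
    obtain ⟨m, hm⟩ := torsion_rep (Nat.pos_of_ne_zero hn0) u hu
    exact ⟨((m : ℕ) : ZMod n), by rw [hθnat, ← hm]⟩
  have htor : ∀ a v : V, n • (e a v) = 0 := by
    intro a v
    calc n • (e a v) = (n • e a) v := (AddMonoidHom.nsmul_apply _ _ _).symm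
    _ = e (n • a) v := by rw [map_nsmul]
    _ = 0 := by rw [hexp a, map_zero, AddMonoidHom.zero_apply]
  have hθinv : ∀ u, n • u = 0 → θ (Function.invFun θ u) = u :=
    fun u hu => Function.invFun_eq (hθsurj u hu)
  -- coordinate maps
  have mk : ∀ f : V →+ AddCircle (1:ℚ), (∀ v, n • f v = 0) →
      { g : V →+ ZMod n // ∀ v, θ (g v) = f v } := by
    intro f hf
    refine ⟨{ toFun := fun v => Function.invFun θ (f v), map_zero' := ?_, map_add' := ?_ },
      fun v => hθinv _ (hf v)⟩
    · apply θinj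
      rw [hθinv _ (hf 0), map_zero, map_zero]
    · intro v w
      apply θinj
      rw [hθinv _ (hf (v + w)), map_add, map_add, hθinv _ (hf v), hθinv _ (hf w)]
  obtain ⟨ψ, hψ⟩ := mk (e x) (htor x)
  -- find y₁ with ψ y₁ = 1
  obtain ⟨g₀, hg₀⟩ := IsAddCyclic.exists_generator (α := ψ.range)
  set g : ZMod n := (g₀ : ZMod n) with hgdef
  have hrange : ∀ v : V, ∃ k : ℤ, ψ v = k • g := by
    intro v
    obtain ⟨k, hk⟩ := hg₀ ⟨ψ v, ⟨v, rfl⟩⟩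
    refine ⟨k, ?_⟩
    have := congrArg (Subtype.val) hk
    simpa using this.symm
  have hng : n • g = 0 := by
    rw [nsmul_eq_mul, ZMod.natCast_self, zero_mul]
  have hmdvd : addOrderOf g ∣ n := addOrderOf_dvd_of_nsmul_eq_zero hng
  have hndvd : n ∣ addOrderOf g := by
    have hsm : addOrderOf g • x = 0 := by
      apply hnd
      intro v
      have h1 : e (addOrderOf g • x) v = addOrderOf g • (e x v) := by
        rw [map_nsmul, AddMonoidHom.nsmul_apply]
      obtain ⟨k, hk⟩ := hrange v
      rw [h1, ← hψ v, hk, ← map_nsmul, ← natCast_zsmul (k • g), smul_comm, natCast_zsmul,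
        addOrderOf_nsmul_eq_zero, smul_zero, map_zero]
    have h2 := addOrderOf_dvd_iff_nsmul_eq_zero.mpr hsm
    rwa [hx, ← hn] at h2
  have hgord : addOrderOf g = n := Nat.dvd_antisymm hmdvd hndvd
  have htopg : zmultiples g = (⊤ : AddSubgroup (ZMod n)) := by
    exact (AddSubgroup.card_eq_iff_eq_top _).mp
      (by rw [Nat.card_zmultiples, hgord, Nat.card_zmod])
  have hfull : ∀ z : ZMod n, ∃ k : ℤ, k • g = z := by
    intro z
    have : z ∈ zmultiples g := htopg ▸ AddSubgroup.mem_top z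
    exact AddSubgroup.mem_zmultiples_iff.mp this
  obtain ⟨y₀, hy₀⟩ : ∃ v : V, ψ v = g := g₀.2.imp (fun v h => h)
  obtain ⟨k₁, hk₁⟩ := hfull 1
  set y₁ : V := k₁ • y₀ with hy₁def
  have hψy₁ : ψ y₁ = 1 := by rw [hy₁def, map_zsmul, hy₀, hk₁]
  obtain ⟨χ, hχ⟩ := mk (e y₁) (htor y₁)
  have hψx : ψ x = 0 := θinj (by rw [hψ, halt, map_zero])
  have hχy₁ : χ y₁ = 0 := θinj (by rw [hχ, halt, map_zero])
  have hχx : χ x = -1 := by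
    apply θinj
    rw [hχ, map_neg, skew e halt y₁ x, ← hψ y₁, hψy₁]
  set W : AddSubgroup V := ψ.ker ⊓ χ.ker with hW
  have hmemW : ∀ w : V, w ∈ W ↔ ψ w = 0 ∧ χ w = 0 := by
    intro w
    rw [hW, AddSubgroup.mem_inf, AddMonoidHom.mem_ker, AddMonoidHom.mem_ker]
  have hone : ∀ b : ZMod n, b.val • (1 : ZMod n) = b := by
    intro b
    rw [nsmul_eq_mul, mul_one, ZMod.natCast_val, ZMod.cast_id]
  -- the decomposition map
  set Φ : ZMod n × ZMod n × ↥W →+ V := {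
    toFun := fun t => t.1.val • x + t.2.1.val • y₁ + (t.2.2 : V)
    map_zero' := by simp [ZMod.val_zero]
    map_add' := by
      intro s t
      simp only [Prod.fst_add, Prod.snd_add, AddSubgroup.coe_add]
      rw [valsmul x (hexp x), valsmul y₁ (hexp y₁)]
      abel } with hΦ
  have hΦapp : ∀ t : ZMod n × ZMod n × ↥W, Φ t = t.1.val • x + t.2.1.val • y₁ + (t.2.2 : V) :=
    fun t => rfl
  have hψΦ : ∀ t : ZMod n × ZMod n × ↥W, ψ (Φ t) = t.2.1 := by
    intro t
    rw [hΦapp, map_add, map_add, map_nsmul, map_nsmul, hψx, hψy₁,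
      ((hmemW _).mp t.2.2.2).1, smul_zero, zero_add, add_zero, hone]
  have hχΦ : ∀ t : ZMod n × ZMod n × ↥W, χ (Φ t) = -t.1 := by
    intro t
    rw [hΦapp, map_add, map_add, map_nsmul, map_nsmul, hχx, hχy₁,
      ((hmemW _).mp t.2.2.2).2, smul_zero, add_zero, add_zero, smul_neg, hone]
  have hΦinj : Function.Injective Φ := by
    intro s t h
    have hb : s.2.1 = t.2.1 := by rw [← hψΦ s, ← hψΦ t, h]
    have ha : s.1 = t.1 := by
      have := congrArg (χ) h
      rw [hχΦ s, hχΦ t, neg_inj] at this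
      exact this
    have hw : (s.2.2 : V) = (t.2.2 : V) := by
      have h' := h
      rw [hΦapp, hΦapp, ha, hb] at h'
      exact add_left_cancel h'
    exact Prod.ext ha (Prod.ext hb (Subtype.ext hw))
  have hΦsurj : Function.Surjective Φ := by
    intro v
    have hwmem : v - (-(χ v)).val • x - (ψ v).val • y₁ ∈ W := by
      rw [hmemW]
      constructor
      · rw [map_sub, map_sub, map_nsmul, map_nsmul, hψx, hψy₁, smul_zero, hone, sub_zero,
          sub_self]
      · rw [map_sub, map_sub, map_nsmul, map_nsmul, hχx, hχy₁, smul_zero, sub_zero, smul_neg,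
          hone, sub_neg_eq_add, add_neg_cancel]
    refine ⟨⟨-(χ v), ψ v, ⟨v - (-(χ v)).val • x - (ψ v).val • y₁, hwmem⟩⟩, ?_⟩
    have habc : ∀ P Q w : V, P + Q + (w - P - Q) = w := by intro P Q w; abel
    rw [hΦapp]
    exact habc _ _ v
  -- the restricted pairing on W
  set eW : ↥W →+ ↥W →+ AddCircle (1:ℚ) := ((e.comp W.subtype).flip.comp W.subtype).flip with heW
  have heWapp : ∀ w w' : ↥W, eW w w' = e (w : V) (w' : V) := fun w w' => rfl
  have haltW : ∀ w : ↥W, eW w w = 0 := fun w => halt (w : V)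
  have hzero : ∀ w : ↥W, e (w : V) x = 0 ∧ e (w : V) y₁ = 0 := by
    intro w
    obtain ⟨h1, h2⟩ := (hmemW _).mp w.2
    constructor
    · rw [skew e halt, ← hψ, h1, map_zero, neg_zero]
    · rw [skew e halt, ← hχ, h2, map_zero, neg_zero]
  have hndW : ∀ w : ↥W, (∀ w' : ↥W, eW w w' = 0) → w = 0 := by
    intro w hw
    apply Subtype.ext
    rw [AddSubgroup.coe_zero]
    apply hnd
    intro v
    obtain ⟨t, rfl⟩ := hΦsurj v
    rw [hΦapp, map_add, map_add, map_nsmul, map_nsmul, (hzero w).1, (hzero w).2, smul_zero,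
      smul_zero, zero_add, zero_add]
    exact hw t.2.2
  -- cardinality bookkeeping
  have hcardV : Nat.card V = n * (n * Nat.card ↥W) := by
    rw [Nat.card_congr (AddEquiv.ofBijective Φ ⟨hΦinj, hΦsurj⟩).toEquiv.symm, Nat.card_prod,
      Nat.card_prod, Nat.card_zmod]
  have hposW : 0 < Nat.card ↥W := Nat.card_pos
  have hlt : Nat.card ↥W < N := by
    rw [← hcard, hcardV]
    calc Nat.card ↥W < 2 * (2 * Nat.card ↥W) := by omega
    _ ≤ n * (n * Nat.card ↥W) := by
        apply Nat.mul_le_mul hn2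
        exact Nat.mul_le_mul hn2 (le_refl _)
  obtain ⟨A', iA', iF', ⟨ω⟩⟩ := ih (Nat.card ↥W) hlt ↥W rfl eW haltW hndW
  letI := iA'
  letI := iF'
  refine ⟨ZMod n × A', inferInstance, inferInstance, ⟨?_⟩⟩
  refine AddEquiv.trans ?_
    ({ toFun := fun t => ((t.1, t.2.2.1), (t.2.1, t.2.2.2))
       invFun := fun t => (t.1.1, (t.2.1, (t.1.2, t.2.2)))
       left_inv := fun t => rfl
       right_inv := fun t => rfl
       map_add' := fun s t => rfl } :
      (ZMod n × ZMod n × (A' × A')) ≃+ ((ZMod n × A') × (ZMod n × A')))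
  exact (AddEquiv.ofBijective Φ ⟨hΦinj, hΦsurj⟩).symm.trans
    (AddEquiv.prodCongr (AddEquiv.refl _) (AddEquiv.prodCongr (AddEquiv.refl _) ω))

end Statement6Aux

/-- If `B` is a finite abelian group with a nondegenerate alternating pairing
`B × B → ℚ/ℤ`, then the `F_2`-dimension of the 2-torsion subgroup `B[2]` is even, i.e. the
cardinality of `B[2]` is `2 ^ (2k)` for some `k`. -/
theorem statement6 (B : Type) [AddCommGroup B] [Finite B]
    (e : B →+ B →+ AddCircle (1 : ℚ))
    (halt : ∀ x : B, e x x = 0)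
    (hnd : ∀ x : B, (∀ y : B, e x y = 0) → x = 0) :
    ∃ k : ℕ, Nat.card {x : B // x + x = 0} = 2 ^ (2 * k) := by
  obtain ⟨A, iA, iF, ⟨φ⟩⟩ := Statement6Aux.key (Nat.card B) B rfl e halt hnd
  letI := iA
  letI := iF
  have equiv1 : {x : B // x + x = 0} ≃ {z : A × A // z + z = 0} :=
    Equiv.subtypeEquiv φ.toEquiv (fun x => by
      constructor
      · intro h
        show φ x + φ x = 0
        rw [← map_add, h, map_zero]
      · intro h
        apply φ.injective
        rw [map_add, map_zero]
        exact h)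
  have equiv2 : {z : A × A // z + z = 0} ≃ ({a : A // a + a = 0} × {a : A // a + a = 0}) :=
    { toFun := fun z => (⟨z.1.1, congrArg Prod.fst z.2⟩, ⟨z.1.2, congrArg Prod.snd z.2⟩)
      invFun := fun t => ⟨(t.1.1, t.2.1), Prod.ext t.1.2 t.2.2⟩
      left_inv := fun z => rfl
      right_inv := fun t => rfl }
  let S : AddSubgroup A := {
    carrier := {a | a + a = 0}
    zero_mem' := by simp
    add_mem' := by
      intro a b ha hb
      have ha' : a + a = 0 := ha
      have hb' : b + b = 0 := hb
      show (a + b) + (a + b) = 0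
      rw [add_add_add_comm, ha', hb', add_zero]
    neg_mem' := by
      intro a ha
      have ha' : a + a = 0 := ha
      show (-a) + (-a) = 0
      rw [← neg_add, ha', neg_zero] }
  haveI : Fact (Nat.Prime 2) := ⟨Nat.prime_two⟩
  have hP : IsPGroup 2 (Multiplicative ↥S) := by
    intro g
    refine ⟨1, ?_⟩
    have hg : Multiplicative.toAdd g + Multiplicative.toAdd g = 0 := by
      apply Subtype.ext
      rw [AddSubgroup.coe_add, AddSubgroup.coe_zero]
      exact (Multiplicative.toAdd g).2
    have h2 : g ^ (2:ℕ) = 1 := by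
      rw [pow_two, ← ofAdd_toAdd g, ← ofAdd_add, hg, ofAdd_zero]
    simpa [pow_one] using h2
  obtain ⟨k, hk⟩ := IsPGroup.exists_card_eq hP
  refine ⟨k, ?_⟩
  have hT : Nat.card {a : A // a + a = 0} = 2 ^ k := by
    rw [← hk]
    exact Nat.card_congr
      ((Equiv.subtypeEquivRight (fun a => Iff.rfl)).trans Multiplicative.toAdd.symm)
  rw [Nat.card_congr (equiv1.trans equiv2), Nat.card_prod, hT, ← pow_add, two_mul]
end

section
/- Let σ be a permutation of a finite set X that is a product of b disjoint cycles of lengths i_1, ..., i_b with p ∤ i_b for a prime p. In the F_p-vector space F_p[X]/span(Σ_{x∈X} e_x), the elements v_j = Σ_{x in cycle j} e_x for j = 1, ..., b−1 form a basis of the σ-fixed subspace. -/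
section PermModule

variable (p : ℕ) (X : Type) [Fintype X]

/-- The permutation representation of `Perm X` on `F_p[X]`. -/
noncomputable def permRep' : Representation (ZMod p) (Equiv.Perm X) (X →₀ ZMod p) where
  toFun g := Finsupp.lmapDomain (ZMod p) (ZMod p) (g • ·)
  map_one' := by ext; simp
  map_mul' x y := by ext; simp [mul_smul, Finsupp.mapDomain_comp]

/-- The sum of all basis vectors `Σ_{x ∈ X} e_x`. -/
noncomputable def allOnes' : X →₀ ZMod p := ∑ x, Finsupp.single x 1

/-- The line spanned by the sum of all basis vectors. -/
noncomputable def allOnesLine' : Submodule (ZMod p) (X →₀ ZMod p) :=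
  Submodule.span (ZMod p) {allOnes' p X}

lemma permRep'_allOnes (σ : Equiv.Perm X) :
    permRep' p X σ (allOnes' p X) = allOnes' p X := by
  unfold permRep' allOnes'
  rw [map_sum]
  refine Fintype.sum_equiv σ _ _ fun i => ?_
  show Finsupp.mapDomain (σ • ·) (Finsupp.single i 1) = _
  rw [Finsupp.mapDomain_single]
  rfl

lemma allOnesLine'_invariant (σ : Equiv.Perm X) :
    ∀ v ∈ allOnesLine' p X, permRep' p X σ v ∈ allOnesLine' p X := by
  intro v hv
  obtain ⟨c, rfl⟩ := Submodule.mem_span_singleton.1 hv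
  rw [map_smul, permRep'_allOnes]
  exact Submodule.smul_mem _ _ (Submodule.mem_span_singleton_self _)

/-- `V = F_p[X] / span(Σ_x e_x)` as a representation of `Perm X`. -/
noncomputable def stdQuotRep' :
    Representation (ZMod p) (Equiv.Perm X) ((X →₀ ZMod p) ⧸ allOnesLine' p X) :=
  (permRep' p X).quot (allOnesLine' p X) (allOnesLine'_invariant p X)

end PermModule

/-!
Write `w_q` for the sum of the basis vectors over a `σ`-orbit `q`. A vector of `F_p[X]` is
`σ`-fixed iff it is constant on orbits, so the fixed vectors form the span of the linearly
independent `w_q`. Let `φ` sum the coordinates over the last orbit `q₀`: it is `σ`-invariant,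
kills `w_q` for `q ≠ q₀`, and takes the value `|q₀| ≠ 0` on `Σ_x e_x`, so the line `L` spanned
by `Σ_x e_x` meets `ker φ` trivially. Hence `σ f - f ∈ L` forces `σ f = f`: the fixed subspace of
`F_p[X]/L` is the image of the span of the `w_q`, in which `w_{q₀} = -Σ_{q ≠ q₀} w_q`, and the
other `w_q` stay independent modulo `L` because they span a subspace of `ker φ`.
-/

open MulAction Submodule

noncomputable section

open scoped Classical

variable {p : ℕ} {X : Type} {σ : Equiv.Perm X}

lemma permRep'_apply_smul (τ : Equiv.Perm X) (f : X →₀ ZMod p) (x : X) :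
    permRep' p X τ f (τ • x) = f x :=
  Finsupp.mapDomain_apply (MulAction.injective τ) f x

lemma Representation.apply_eq_self_of_mem_zpowers {k G V : Type*} [CommSemiring k] [Group G]
    [AddCommMonoid V] [Module k V] (ρ : Representation k G V) {g τ : G} {v : V}
    (hv : ρ g v = v) (hτ : τ ∈ Subgroup.zpowers g) : ρ τ v = v := by
  have : Subgroup.zpowers g ≤ (stabilizer (Module.End k V)ˣ v).comap ρ.asGroupHom :=
    Subgroup.zpowers_le.2 hv
  exact this hτ

lemma apply_eq_of_mem_orbit_zpowers {f : X →₀ ZMod p} (hf : permRep' p X σ f = f) {x y : X}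
    (h : x ∈ orbit (Subgroup.zpowers σ) y) : f x = f y := by
  obtain ⟨⟨τ, hτ⟩, rfl⟩ := h
  conv_lhs => rw [← (permRep' p X).apply_eq_self_of_mem_zpowers hf hτ]
  exact permRep'_apply_smul τ f y

lemma perm_smul_mem_orbit_iff (q : orbitRel.Quotient (Subgroup.zpowers σ) X) (x : X) :
    σ • x ∈ q.orbit ↔ x ∈ q.orbit := by
  simp only [orbitRel.Quotient.mem_orbit]
  exact iff_of_eq (congrArg (· = q) (Quotient.sound ⟨⟨σ, Subgroup.mem_zpowers σ⟩, rfl⟩))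

variable [Fintype X]

lemma stdQuotRep'_mk (τ : Equiv.Perm X) (f : X →₀ ZMod p) :
    stdQuotRep' p X τ (Submodule.Quotient.mk f) = Submodule.Quotient.mk (permRep' p X τ f) :=
  rfl

variable (q : orbitRel.Quotient (Subgroup.zpowers σ) X)

variable (p) in
def orbitSum : X →₀ ZMod p :=
  ∑ x ∈ q.orbit.toFinset, Finsupp.single x 1

lemma orbitSum_apply (x : X) : orbitSum p q x = if x ∈ q.orbit then 1 else 0 := by
  simp [orbitSum, Finsupp.finsetSum_apply, Finsupp.single_apply]

lemma finsum_single_eq_orbitSum :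
    ∑ᶠ x ∈ q.orbit, Finsupp.single x (1 : ZMod p) = orbitSum p q := by
  rw [orbitSum, ← finsum_mem_coe_finset, Set.coe_toFinset]

lemma permRep'_orbitSum : permRep' p X σ (orbitSum p q) = orbitSum p q := by
  ext x
  obtain ⟨y, rfl⟩ := (MulAction.bijective σ).surjective x
  rw [permRep'_apply_smul, orbitSum_apply, orbitSum_apply, perm_smul_mem_orbit_iff]

variable (p) in
def orbitCoeffSum : (X →₀ ZMod p) →ₗ[ZMod p] ZMod p :=
  ∑ x ∈ q.orbit.toFinset, Finsupp.lapply x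

lemma orbitCoeffSum_apply (f : X →₀ ZMod p) :
    orbitCoeffSum p q f = ∑ x ∈ q.orbit.toFinset, f x := by
  simp [orbitCoeffSum]

lemma orbitCoeffSum_permRep' (f : X →₀ ZMod p) :
    orbitCoeffSum p q (permRep' p X σ f) = orbitCoeffSum p q f := by
  rw [orbitCoeffSum_apply, orbitCoeffSum_apply]
  symm
  refine Finset.sum_equiv σ (fun x => ?_) (fun x _ => (permRep'_apply_smul σ f x).symm)
  simp only [Set.mem_toFinset]
  exact (perm_smul_mem_orbit_iff q x).symm

lemma orbitCoeffSum_orbitSum_of_ne {q' : orbitRel.Quotient (Subgroup.zpowers σ) X} (h : q' ≠ q) :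
    orbitCoeffSum p q (orbitSum p q') = 0 := by
  rw [orbitCoeffSum_apply]
  refine Finset.sum_eq_zero fun x hx => ?_
  rw [Set.mem_toFinset, orbitRel.Quotient.mem_orbit] at hx
  rw [orbitSum_apply, orbitRel.Quotient.mem_orbit, hx, if_neg h.symm]

lemma orbitCoeffSum_allOnes' : orbitCoeffSum p q (allOnes' p X) = Nat.card q.orbit := by
  simp [orbitCoeffSum_apply, allOnes', Finsupp.single_apply, Nat.card_eq_fintype_card]

lemma sum_orbitSum :
    ∑ q : orbitRel.Quotient (Subgroup.zpowers σ) X, orbitSum p q = allOnes' p X := by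
  ext x
  simp [Finsupp.finsetSum_apply, orbitSum_apply, orbitRel.Quotient.mem_orbit, allOnes',
    Finsupp.single_apply]

lemma linearIndependent_orbitSum :
    LinearIndependent (ZMod p) (orbitSum p : orbitRel.Quotient (Subgroup.zpowers σ) X → _) := by
  refine linearIndependent_iff'.2 fun s c hc q hq => ?_
  simpa [Finsupp.finsetSum_apply, orbitSum_apply, orbitRel.Quotient.mem_orbit, hq] using
    congrArg (· q.out) hc

lemma eq_sum_orbitSum_of_fixed {f : X →₀ ZMod p} (hf : permRep' p X σ f = f) :
    f = ∑ q : orbitRel.Quotient (Subgroup.zpowers σ) X, f q.out • orbitSum p q := by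
  ext x
  simp only [Finsupp.finsetSum_apply, Finsupp.smul_apply, orbitSum_apply,
    orbitRel.Quotient.mem_orbit, smul_eq_mul, mul_ite, mul_one, mul_zero, Finset.sum_ite_eq,
    Finset.mem_univ, if_true]
  exact (apply_eq_of_mem_orbit_zpowers hf (orbitRel_apply.1 (Quotient.mk_out x))).symm

lemma disjoint_allOnesLine'_ker_orbitCoeffSum [Fact p.Prime] (hq : ¬ p ∣ Nat.card q.orbit) :
    Disjoint (allOnesLine' p X) (LinearMap.ker (orbitCoeffSum p q)) := by
  refine Submodule.disjoint_def.2 fun f hf hfq => ?_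
  obtain ⟨c, rfl⟩ := mem_span_singleton.1 hf
  rw [LinearMap.mem_ker, map_smul, orbitCoeffSum_allOnes', smul_eq_mul, mul_eq_zero,
    ZMod.natCast_eq_zero_iff] at hfq
  rw [hfq.resolve_right hq, zero_smul]

lemma ker_permRep'_sub_id_eq_span_orbitSum :
    LinearMap.ker (permRep' p X σ - LinearMap.id) =
      span (ZMod p) (Set.range (orbitSum (σ := σ) p)) := by
  refine le_antisymm (fun f hf => ?_) (span_le.2 ?_)
  · rw [LinearMap.mem_ker, LinearMap.sub_apply, LinearMap.id_apply, sub_eq_zero] at hf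
    rw [eq_sum_orbitSum_of_fixed hf]
    exact sum_mem fun q _ => smul_mem _ _ (subset_span ⟨q, rfl⟩)
  · rintro _ ⟨q, rfl⟩
    rw [SetLike.mem_coe, LinearMap.mem_ker, LinearMap.sub_apply, LinearMap.id_apply,
      permRep'_orbitSum, sub_self]

lemma ker_stdQuotRep'_sub_id_eq_map_mkQ [Fact p.Prime] (hq : ¬ p ∣ Nat.card q.orbit) :
    LinearMap.ker (stdQuotRep' p X σ - LinearMap.id) =
      (LinearMap.ker (permRep' p X σ - LinearMap.id)).map (allOnesLine' p X).mkQ := by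
  ext y
  constructor
  · intro hy
    obtain ⟨f, rfl⟩ := Submodule.Quotient.mk_surjective _ y
    rw [LinearMap.mem_ker, LinearMap.sub_apply, LinearMap.id_apply, stdQuotRep'_mk,
      ← Submodule.Quotient.mk_sub, Submodule.Quotient.mk_eq_zero] at hy
    have hq_ker : permRep' p X σ f - f ∈ LinearMap.ker (orbitCoeffSum p q) := by
      rw [LinearMap.mem_ker, map_sub, orbitCoeffSum_permRep', sub_self]
    refine ⟨f, ?_, rfl⟩
    rw [SetLike.mem_coe, LinearMap.mem_ker, LinearMap.sub_apply, LinearMap.id_apply]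
    exact Submodule.disjoint_def.1 (disjoint_allOnesLine'_ker_orbitCoeffSum q hq) _ hy hq_ker
  · rintro ⟨g, hg, rfl⟩
    rw [SetLike.mem_coe, LinearMap.mem_ker, LinearMap.sub_apply, LinearMap.id_apply] at hg
    rw [LinearMap.mem_ker, LinearMap.sub_apply, LinearMap.id_apply, mkQ_apply, stdQuotRep'_mk,
      ← Submodule.Quotient.mk_sub, hg, Submodule.Quotient.mk_zero]

lemma linearIndependent_mkQ_orbitSum_comp [Fact p.Prime] {ι : Type*}
    {f : ι → orbitRel.Quotient (Subgroup.zpowers σ) X} (hf : Function.Injective f)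
    (hq : ¬ p ∣ Nat.card q.orbit) (hfq : ∀ i, f i ≠ q) :
    LinearIndependent (ZMod p) ((allOnesLine' p X).mkQ ∘ orbitSum p ∘ f) := by
  have h0 : LinearIndependent (ZMod p) (orbitSum p ∘ f) := linearIndependent_orbitSum.comp f hf
  refine LinearIndependent.map (f := (allOnesLine' p X).mkQ) h0 ?_
  rw [ker_mkQ]
  refine (disjoint_allOnesLine'_ker_orbitCoeffSum q hq).symm.mono_left (span_le.2 ?_)
  rintro _ ⟨i, rfl⟩
  exact orbitCoeffSum_orbitSum_of_ne q (hfq i)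

lemma span_range_comp_castSucc_of_sum_eq_zero {R M : Type*} [Ring R] [AddCommGroup M]
    [Module R M] {m : ℕ} (u : Fin (m + 1) → M) (hu : ∑ i, u i = 0) :
    span R (Set.range (u ∘ Fin.castSucc)) = span R (Set.range u) := by
  refine le_antisymm (span_mono (Set.range_comp_subset_range _ _)) (span_le.2 ?_)
  rintro _ ⟨i, rfl⟩
  induction i using Fin.lastCases with
  | last =>
    rw [Fin.sum_univ_castSucc] at hu
    rw [SetLike.mem_coe, eq_neg_of_add_eq_zero_right hu]
    exact neg_mem (sum_mem fun j _ => subset_span ⟨j, rfl⟩)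
  | cast j => exact subset_span ⟨j, rfl⟩

end

/-- Let `σ` be a permutation of a finite set `X` that is a product of `b`
disjoint cycles (enumerated by `e : Fin b ≃ {orbits of σ}`), whose last cycle has length not
divisible by the prime `p`.  In `V = F_p[X]/span(Σ_x e_x)`, the images `v_j` of the sums of
basis vectors over the `j`-th cycle, `j = 1, …, b−1`, form a basis of the `σ`-fixed
subspace. -/
theorem statement13 (p : ℕ) (hp : p.Prime) (X : Type) [Fintype X]
    (σ : Equiv.Perm X) (b : ℕ) (hb : 0 < b)
    (e : Fin b ≃ MulAction.orbitRel.Quotient (Subgroup.zpowers σ) X)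
    (hlast : ¬ p ∣ Nat.card (MulAction.orbitRel.Quotient.orbit (e ⟨b - 1, by omega⟩)))
    (v : Fin (b - 1) → (X →₀ ZMod p) ⧸ allOnesLine' p X)
    (hv : ∀ j : Fin (b - 1), v j = Submodule.Quotient.mk
      (∑ᶠ x ∈ MulAction.orbitRel.Quotient.orbit (e (Fin.castLE (Nat.sub_le b 1) j)),
        Finsupp.single x (1 : ZMod p))) :
    LinearIndependent (ZMod p) v ∧
      Submodule.span (ZMod p) (Set.range v)
        = LinearMap.ker (stdQuotRep' p X σ - LinearMap.id) := by
  classical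
  have := Fact.mk hp
  obtain ⟨m, rfl⟩ : ∃ m, b = m + 1 := ⟨b - 1, by omega⟩
  let π := (allOnesLine' p X).mkQ
  have hv_eq : v = (π ∘ orbitSum p ∘ e) ∘ Fin.castSucc :=
    funext fun j => by rw [hv, finsum_single_eq_orbitSum]; rfl
  have hsum : ∑ i, (π ∘ orbitSum p ∘ e) i = 0 := by
    simp only [Function.comp_apply]
    rw [← map_sum, Fintype.sum_equiv e _ (orbitSum p) fun _ => rfl,
      sum_orbitSum, mkQ_apply, Submodule.Quotient.mk_eq_zero]
    exact mem_span_singleton_self _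
  refine ⟨?_, ?_⟩
  · rw [hv_eq]
    exact linearIndependent_mkQ_orbitSum_comp _ (e.injective.comp (Fin.castSucc_injective m))
      hlast fun j h => (Fin.castSucc_lt_last j).ne (e.injective h)
  · rw [hv_eq, span_range_comp_castSucc_of_sum_eq_zero _ hsum,
      ker_stdQuotRep'_sub_id_eq_map_mkQ _ hlast, ker_permRep'_sub_id_eq_span_orbitSum, map_span,
      ← Set.range_comp, ← e.surjective.range_comp]
    rfl
end

section
/- Let G and H be abelian groups, p a prime, and M ⊆ G × H a subgroup. Suppose the natural map M/M^p → G/G^p (induced by projection to G, where N^p denotes the subgroup of p-th powers) is injective. Then the restriction map Hom((G × H)/M, μ_p) → Hom(H, μ_p), induced by h ↦ (0, h), is surjective. -/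
/-!
Put `Q = (G × H) / M`. A character of order `p` of `Q` is the same as one of the `𝔽_p`-vector space
`Q / Q^p`, and linear maps extend from subspaces; so `χ` extends along `H → Q / Q^p` as soon as it
vanishes on the kernel. The injectivity hypothesis says that `(1, h)` lies in `M · (G × H)^p` only
if `h` is a `p`-th power in `H`, on which `χ` is trivial.
-/

section PowEqOne

variable {p : ℕ} [Fact p.Prime] {A B K : Type*} [CommGroup A] [CommGroup B] [CommGroup K]

/-- Groups of exponent `p` are `𝔽_p`-vector spaces, in which every subspace has a complement. -/
theorem MonoidHom.exists_extend_of_pow_eq_one (hB : ∀ b : B, b ^ p = 1) (hK : ∀ k : K, k ^ p = 1)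
    {S : Subgroup B} (φ : S →* K) : ∃ ψ : B →* K, ψ.comp S.subtype = φ := by
  have : Module (ZMod p) (Additive B) :=
    AddCommGroup.zmodModule fun b => congrArg Additive.ofMul (hB b.toMul)
  have : Module (ZMod p) (Additive K) :=
    AddCommGroup.zmodModule fun k => congrArg Additive.ofMul (hK k.toMul)
  let S' : Submodule (ZMod p) (Additive B) := AddSubgroup.toZModSubmodule p S.toAddSubgroup
  let φ' : ↥S' →+ Additive K := MonoidHom.toAdditive φ
  obtain ⟨ψ, hψ⟩ := LinearMap.exists_extend (φ'.toZModLinearMap p)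
  exact ⟨MonoidHom.toAdditive.symm ψ.toAddMonoidHom,
    MonoidHom.ext fun s => congrArg Additive.toMul (LinearMap.congr_fun hψ s)⟩

theorem MonoidHom.exists_comp_eq_of_ker_le_of_pow_eq_one (hB : ∀ b : B, b ^ p = 1)
    (hK : ∀ k : K, k ^ p = 1) (j : A →* B) (χ : A →* K) (hker : j.ker ≤ χ.ker) :
    ∃ ψ : B →* K, ψ.comp j = χ := by
  let φ : j.range →* K :=
    (QuotientGroup.lift j.ker χ hker).comp (QuotientGroup.quotientKerEquivRange j).symm.toMonoidHom
  obtain ⟨ψ, hψ⟩ := exists_extend_of_pow_eq_one hB hK φ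
  refine ⟨ψ, MonoidHom.ext fun a => ?_⟩
  have hφ : φ (j.rangeRestrict a) = χ a := congrArg (QuotientGroup.lift j.ker χ hker)
    ((QuotientGroup.quotientKerEquivRange j).symm_apply_apply (a : A ⧸ j.ker))
  exact (DFunLike.congr_fun hψ (j.rangeRestrict a)).trans hφ

theorem MonoidHom.exists_comp_eq_of_pow_eq_one (hK : ∀ k : K, k ^ p = 1) (ι : A →* B)
    (χ : A →* K) (hχ : ∀ a, ι a ∈ (powMonoidHom p).range → χ a = 1) :
    ∃ ψ : B →* K, ψ.comp ι = χ := by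
  let P := (powMonoidHom p : B →* B).range
  have hP : ∀ b : B ⧸ P, b ^ p = 1 := QuotientGroup.forall_mk.2 fun b =>
    (QuotientGroup.eq_one_iff _).2 ⟨b, rfl⟩
  obtain ⟨ψ, hψ⟩ := exists_comp_eq_of_ker_le_of_pow_eq_one hP hK ((QuotientGroup.mk' P).comp ι) χ
    fun a ha => hχ a ((QuotientGroup.eq_one_iff _).1 ha)
  exact ⟨ψ.comp (QuotientGroup.mk' P), hψ⟩

end PowEqOne

theorem Subgroup.exists_pow_eq_of_mk_inr_mem_range_pow {G H : Type*} [CommGroup G] [CommGroup H]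
    {p : ℕ} {M : Subgroup (G × H)}
    (hinj : ∀ m ∈ M, (∃ g : G, g ^ p = m.1) → ∃ m' ∈ M, m' ^ p = m) {h : H}
    (hh : (((1, h) : G × H) : (G × H) ⧸ M) ∈ (powMonoidHom p).range) : ∃ k : H, k ^ p = h := by
  obtain ⟨q, hq⟩ := hh
  obtain ⟨⟨g, k⟩, rfl⟩ := QuotientGroup.mk_surjective q
  have hm : ((g, k) ^ p)⁻¹ * (1, h) ∈ M := QuotientGroup.eq.mp hq
  obtain ⟨m', -, hm'⟩ := hinj _ hm ⟨g⁻¹, by simp⟩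
  refine ⟨k * m'.2, ?_⟩
  rw [mul_pow, ← Prod.pow_snd, hm']
  simp

/-- (Klagsbrun–Mazur–Rubin, Lemma 6.6(ii).)  Let `G`, `H` be abelian groups,
`p` a prime, and `M ⊆ G × H` a subgroup.  If the natural map `M/M^p → G/G^p` is injective
(i.e. any `m ∈ M` whose first coordinate is a `p`-th power in `G` is a `p`-th power in `M`),
then the restriction map `Hom((G × H)/M, μ_p) → Hom(H, μ_p)` is surjective. -/
theorem statement19 (p : ℕ) (hp : p.Prime) (G H : Type) [CommGroup G] [CommGroup H]
    (M : Subgroup (G × H))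
    (hinj : ∀ m ∈ M, (∃ g : G, g ^ p = m.1) → ∃ m' ∈ M, m' ^ p = m) :
    ∀ χ : H →* rootsOfUnity p ℂ,
      ∃ ψ : (G × H) ⧸ M →* rootsOfUnity p ℂ,
        ∀ h : H, ψ (QuotientGroup.mk (1, h)) = χ h := by
  intro χ
  have : Fact p.Prime := ⟨hp⟩
  have hμ : ∀ ζ : rootsOfUnity p ℂ, ζ ^ p = 1 := fun ζ => Subtype.ext ((mem_rootsOfUnity _ _).1 ζ.2)
  obtain ⟨ψ, hψ⟩ := MonoidHom.exists_comp_eq_of_pow_eq_one hμ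
    ((QuotientGroup.mk' M).comp (MonoidHom.inr G H)) χ fun h hh => by
      obtain ⟨k, rfl⟩ := Subgroup.exists_pow_eq_of_mk_inr_mem_range_pow hinj hh
      rw [map_pow, hμ]
  exact ⟨ψ, DFunLike.congr_fun hψ⟩
end
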